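/- arXiv:2201.03136 — 4 statements merged into one kernel-verified Lean document; each statement's English description precedes it below -/
import Mathlib

section
/- Let (𝒜, ℬ) be the non-minimal input-output realization of a SISO transfer function b(z)/a(z) with a(z) = z^n + a_1 z^{n−1} + ⋯ + a_n and b(z) = b_1 z^{n−1} + ⋯ + b_n. If the polynomials a(z) and b(z) are coprime, then the pair (𝒜, ℬ) ∈ ℝ^{2n×2n} × ℝ^{2n×1} is controllable. -/
open Polynomial Matrix

/-- The `𝒜` matrix of the non-minimal input-output realization: two shift blocks,
with the row `[−a_n,…,−a_1, b_n,…,b_1]` in position `n` (index `n−1`). -/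
def calA (n : ℕ) (a b : Fin n → ℝ) : Matrix (Fin n ⊕ Fin n) (Fin n ⊕ Fin n) ℝ :=
  Matrix.of fun i j =>
    match i, j with
    | Sum.inl i, Sum.inl j => if i.1 = n - 1 then -a j.rev else if j.1 = i.1 + 1 then 1 else 0
    | Sum.inl i, Sum.inr j => if i.1 = n - 1 then b j.rev else 0
    | Sum.inr _, Sum.inl _ => 0
    | Sum.inr i, Sum.inr j => if i.1 = n - 1 then 0 else if j.1 = i.1 + 1 then 1 else 0

/-- The `ℬ` vector of the non-minimal realization: `e_{2n}`. -/
def calB (n : ℕ) : (Fin n ⊕ Fin n) → ℝ :=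
  fun i => match i with
  | Sum.inl _ => 0
  | Sum.inr i => if i.1 = n - 1 then 1 else 0

/-- Kalman rank test: `(M, b)` is controllable iff `rank [b, Mb, …, M^{k−1}b] = k`. -/
def Controllable {ι : Type*} [Fintype ι] [DecidableEq ι]
    (M : Matrix ι ι ℝ) (b : ι → ℝ) : Prop :=
  (Matrix.of fun (i : ι) (j : Fin (Fintype.card ι)) => (M ^ (j : ℕ)).mulVec b i).rank
    = Fintype.card ι

noncomputable def markov (n : ℕ) (a b : Fin n → ℝ) : ℕ → ℝ
  | 0 => 0
  | k + 1 => (if h : k < n then b ⟨k, h⟩ else 0) - ∑ m : Fin n, a m * markov n a b (k - m.1)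
  decreasing_by exact Nat.lt_succ_of_le (Nat.sub_le _ _)

lemma krylov (n : ℕ) (hn : 1 ≤ n) (a b : Fin n → ℝ) (k : ℕ) :
    ((calA n a b) ^ k) *ᵥ (calB n) =
      Sum.elim (fun i : Fin n => markov n a b (k + i.1 + 1 - n))
               (fun i : Fin n => if i.1 + k = n - 1 then (1:ℝ) else 0) := by
  induction k with
  | zero =>
    rw [pow_zero, Matrix.one_mulVec]
    funext i
    cases i with
    | inl i =>
      show (0:ℝ) = markov n a b (0 + i.1 + 1 - n)
      rw [show 0 + i.1 + 1 - n = 0 from by omega, markov]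
    | inr i =>
      simp [calB]
  | succ k ih =>
    rw [pow_succ', ← Matrix.mulVec_mulVec, ih]
    funext i
    have expand : ∀ (w : (Fin n ⊕ Fin n) → ℝ), (calA n a b *ᵥ w) i
        = ∑ j : Fin n, calA n a b i (Sum.inl j) * w (Sum.inl j)
          + ∑ j : Fin n, calA n a b i (Sum.inr j) * w (Sum.inr j) := by
      intro w; simp [Matrix.mulVec, dotProduct, Fintype.sum_sum_type]
    rw [expand]
    cases i with
    | inl i =>
      by_cases hi : i.1 = n - 1
      · simp only [calA, Matrix.of_apply, hi, eq_self_iff_true, if_true, Sum.elim_inl, Sum.elim_inr]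
        have e1 : ∑ j : Fin n, -a j.rev * markov n a b (k + j.1 + 1 - n)
            = - ∑ m : Fin n, a m * markov n a b (k - m.1) := by
          rw [← Finset.sum_neg_distrib]
          apply Fintype.sum_bijective Fin.rev Fin.rev_bijective
          intro j
          have hj := j.isLt
          have hidx : k + j.1 + 1 - n = k - (Fin.rev j).1 := by rw [Fin.val_rev]; omega
          rw [neg_mul, hidx]
        have e2 : ∑ j : Fin n, b j.rev * (if j.1 + k = n - 1 then (1:ℝ) else 0)
            = if h : k < n then b ⟨k, h⟩ else 0 := by
          by_cases hk : k < n
          · rw [dif_pos hk, Finset.sum_eq_single (⟨n - 1 - k, by omega⟩ : Fin n)]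
            · rw [if_pos (by simp; omega)]
              have : Fin.rev (⟨n - 1 - k, by omega⟩ : Fin n) = ⟨k, hk⟩ := by
                apply Fin.ext; rw [Fin.val_rev]; simp; omega
              rw [this, mul_one]
            · intro j _ hj
              rw [if_neg, mul_zero]
              intro hc
              exact hj (Fin.ext (by simp; omega))
            · intro h; exact absurd (Finset.mem_univ _) h
          · rw [dif_neg hk]
            apply Finset.sum_eq_zero
            intro j _
            rw [if_neg (by omega), mul_zero]
        rw [e1, e2]
        rw [show k + 1 + (n - 1) + 1 - n = k + 1 from by omega, markov]
        ring
      · simp only [calA, Matrix.of_apply, hi, if_false, Sum.elim_inl, Sum.elim_inr]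
        have hi2 : i.1 + 1 < n := by omega
        have e1 : ∑ j : Fin n, (if j.1 = i.1 + 1 then (1:ℝ) else 0) * markov n a b (k + j.1 + 1 - n)
            = markov n a b (k + (i.1 + 1) + 1 - n) := by
          rw [Finset.sum_eq_single (⟨i.1 + 1, hi2⟩ : Fin n)]
          · rw [if_pos rfl, one_mul]
          · intro j _ hj
            rw [if_neg, zero_mul]
            intro hc; exact hj (Fin.ext hc)
          · intro h; exact absurd (Finset.mem_univ _) h
        rw [e1]
        simp only [mul_zero, zero_mul, Finset.sum_const_zero, add_zero]
        congr 1
        omega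
    | inr i =>
      by_cases hi : i.1 = n - 1
      · simp only [calA, Matrix.of_apply, hi, eq_self_iff_true, if_true, Sum.elim_inl, Sum.elim_inr]
        rw [if_neg (by omega)]
        simp
      · simp only [calA, Matrix.of_apply, hi, if_false, Sum.elim_inl, Sum.elim_inr]
        have hi2 : i.1 + 1 < n := by omega
        have e1 : ∑ j : Fin n, (if j.1 = i.1 + 1 then (1:ℝ) else 0) * (if j.1 + k = n - 1 then (1:ℝ) else 0)
            = if i.1 + (k + 1) = n - 1 then (1:ℝ) else 0 := by
          rw [Finset.sum_eq_single (⟨i.1 + 1, hi2⟩ : Fin n)]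
          · rw [if_pos rfl, one_mul]
            congr 1
            simp only [eq_iff_iff]
            constructor <;> (intro h; omega)
          · intro j _ hj
            rw [if_neg, zero_mul]
            intro hc; exact hj (Fin.ext hc)
          · intro h; exact absurd (Finset.mem_univ _) h
        rw [← e1]
        simp


noncomputable def polOf (n : ℕ) (c : Fin n → ℝ) : ℝ[X] := ∑ j : Fin n, C (c j) * X ^ (j.1)

noncomputable def ext' (n : ℕ) (c : Fin n → ℝ) (m : ℕ) : ℝ := if h : m < n then c ⟨m, h⟩ else 0

lemma coeff_polOf (n : ℕ) (c : Fin n → ℝ) (t : ℕ) : (polOf n c).coeff t = ext' n c t := by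
  rw [polOf, finset_sum_coeff]
  simp only [coeff_C_mul, coeff_X_pow]
  rw [ext']
  split_ifs with ht
  · rw [Finset.sum_eq_single (⟨t, ht⟩ : Fin n)]
    · simp
    · intro j _ hj
      rw [if_neg, mul_zero]
      intro hc; exact hj (Fin.ext hc.symm)
    · intro h; exact absurd (Finset.mem_univ _) h
  · apply Finset.sum_eq_zero
    intro j _
    rw [if_neg (by omega), mul_zero]

lemma reflect_sum {ι : Type*} (N : ℕ) (s : Finset ι) (f : ι → ℝ[X]) :
    reflect N (∑ i ∈ s, f i) = ∑ i ∈ s, reflect N (f i) := by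
  induction s using Finset.cons_induction with
  | empty => simp
  | cons i s hi ih => rw [Finset.sum_cons, Finset.sum_cons, reflect_add, ih]

lemma reflect_polOf (n : ℕ) (c : Fin n → ℝ) :
    reflect (n - 1) (polOf n c) = ∑ j : Fin n, C (c j) * X ^ (n - 1 - j.1) := by
  rw [polOf, reflect_sum]
  apply Finset.sum_congr rfl
  intro j _
  rw [reflect_C_mul_X_pow, revAt_le (by omega : j.1 ≤ n - 1)]

lemma natDegree_reflect_le {N : ℕ} {f : ℝ[X]} (h : f.natDegree ≤ N) :
    (reflect N f).natDegree ≤ N := by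
  rw [natDegree_le_iff_coeff_eq_zero]
  intro m hm
  rw [coeff_reflect, revAt_eq_self_of_lt hm]
  exact coeff_eq_zero_of_natDegree_lt (lt_of_le_of_lt h hm)

lemma reflect_reflect' (N : ℕ) (f : ℝ[X]) : reflect N (reflect N f) = f := by
  ext t; rw [coeff_reflect, coeff_reflect, revAt_invol]

lemma natDegree_polOf_le (n : ℕ) (hn : 1 ≤ n) (c : Fin n → ℝ) :
    (polOf n c).natDegree ≤ n - 1 := by
  rw [natDegree_le_iff_coeff_eq_zero]
  intro m hm
  rw [coeff_polOf, ext', dif_neg (by omega)]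

lemma coeff_abar (n : ℕ) (hn : 1 ≤ n) (a : Fin n → ℝ) (t : ℕ) :
    (reflect n ((X : ℝ[X]) ^ n + reflect (n - 1) (polOf n a))).coeff t
      = if t = 0 then 1 else if t ≤ n then ext' n a (t - 1) else 0 := by
  rw [coeff_reflect, coeff_add, coeff_X_pow, coeff_reflect, coeff_polOf]
  by_cases h0 : t = 0
  · subst h0
    rw [if_pos rfl, revAt_le (Nat.zero_le n), Nat.sub_zero, if_pos rfl,
        revAt_eq_self_of_lt (show n - 1 < n from by omega), ext', dif_neg (by omega)]
    norm_num
  · by_cases h1 : t ≤ n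
    · rw [if_neg h0, if_pos h1, revAt_le h1, if_neg (by omega),
          revAt_le (by omega : n - t ≤ n - 1)]
      rw [show n - 1 - (n - t) = t - 1 from by omega]
      ring
    · rw [if_neg h0, if_neg h1, revAt_eq_self_of_lt (show n < t from by omega),
          if_neg (by omega), revAt_eq_self_of_lt (show n - 1 < t from by omega),
          ext', dif_neg (by omega)]
      ring

lemma coeff_bbar (n : ℕ) (hn : 1 ≤ n) (b : Fin n → ℝ) (t : ℕ) :
    (reflect n (reflect (n - 1) (polOf n b))).coeff t
      = if 1 ≤ t ∧ t ≤ n then ext' n b (t - 1) else 0 := by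
  rw [coeff_reflect, coeff_reflect, coeff_polOf]
  by_cases h0 : t = 0
  · subst h0
    rw [if_neg (by omega), revAt_le (Nat.zero_le n), Nat.sub_zero,
        revAt_eq_self_of_lt (show n - 1 < n from by omega), ext', dif_neg (by omega)]
  · by_cases h1 : t ≤ n
    · rw [if_pos ⟨by omega, h1⟩, revAt_le h1, revAt_le (by omega : n - t ≤ n - 1),
          show n - 1 - (n - t) = t - 1 from by omega]
    · rw [if_neg (by omega), revAt_eq_self_of_lt (show n < t from by omega),
          revAt_eq_self_of_lt (show n - 1 < t from by omega), ext', dif_neg (by omega)]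

lemma markov_succ (n : ℕ) (a b : Fin n → ℝ) (k : ℕ) :
    markov n a b (k + 1)
      = ext' n b k - ∑ m ∈ Finset.range n, ext' n a m * markov n a b (k - m) := by
  rw [markov]
  congr 1
  rw [← Fin.sum_univ_eq_sum_range (fun m => ext' n a m * markov n a b (k - m)) n]
  apply Finset.sum_congr rfl
  intro m _
  rw [ext', dif_pos m.isLt, Fin.eta]

lemma L1 (n : ℕ) (hn : 1 ≤ n) (a b : Fin n → ℝ) :
    ((reflect n ((X : ℝ[X]) ^ n + reflect (n - 1) (polOf n a)) : ℝ[X]) : PowerSeries ℝ)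
        * PowerSeries.mk (markov n a b)
      = ((reflect n (reflect (n - 1) (polOf n b)) : ℝ[X]) : PowerSeries ℝ) := by
  apply PowerSeries.ext
  intro d
  rw [PowerSeries.coeff_mul, Finset.Nat.sum_antidiagonal_eq_sum_range_succ_mk]
  simp only [Polynomial.coeff_coe, PowerSeries.coeff_mk]
  rw [coeff_bbar n hn b d]
  cases d with
  | zero =>
    rw [Finset.sum_range_one, coeff_abar n hn a 0, if_pos rfl]
    rw [show (0:ℕ) - 0 = 0 from rfl, markov, if_neg (by omega)]
    ring
  | succ k =>
    rw [Finset.sum_range_succ', coeff_abar n hn a 0, if_pos rfl, one_mul,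
        Nat.sub_zero, markov_succ, Nat.add_sub_cancel]
    have hRHS : (if 1 ≤ k + 1 ∧ k + 1 ≤ n then ext' n b k else 0) = ext' n b k := by
      by_cases h : k + 1 ≤ n
      · rw [if_pos ⟨by omega, h⟩]
      · rw [if_neg (by omega), ext', dif_neg (by omega)]
    rw [hRHS]
    have hpt : ∀ i, (reflect n ((X : ℝ[X]) ^ n + reflect (n - 1) (polOf n a))).coeff (i + 1)
          * markov n a b (k + 1 - (i + 1))
        = ext' n a i * markov n a b (k - i) := by
      intro i
      rw [coeff_abar n hn a (i + 1), if_neg (by omega), Nat.add_sub_cancel,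
          Nat.succ_sub_succ]
      by_cases h : i + 1 ≤ n
      · rw [if_pos h]
      · rw [if_neg h, ext', dif_neg (by omega), zero_mul]
    have hzero : ∀ i, k - i = 0 → markov n a b (k - i) = 0 := by
      intro i h; rw [h, markov]
    have key : ∑ i ∈ Finset.range (k + 1),
          (reflect n ((X : ℝ[X]) ^ n + reflect (n - 1) (polOf n a))).coeff (i + 1)
            * markov n a b (k + 1 - (i + 1))
        = ∑ m ∈ Finset.range n, ext' n a m * markov n a b (k - m) := by
      rw [Finset.sum_congr rfl (fun i _ => hpt i)]
      have h1 : ∑ i ∈ Finset.range (k + 1), ext' n a i * markov n a b (k - i)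
          = ∑ i ∈ Finset.range (max n (k + 1)), ext' n a i * markov n a b (k - i) := by
        apply Finset.sum_subset (Finset.range_subset_range.mpr (le_max_right _ _))
        intro i _ hi
        rw [Finset.mem_range, not_lt] at hi
        rw [hzero i (by omega), mul_zero]
      have h2 : ∑ i ∈ Finset.range n, ext' n a i * markov n a b (k - i)
          = ∑ i ∈ Finset.range (max n (k + 1)), ext' n a i * markov n a b (k - i) := by
        apply Finset.sum_subset (Finset.range_subset_range.mpr (le_max_left _ _))
        intro i _ hi
        rw [Finset.mem_range, not_lt] at hi
        rw [ext', dif_neg (by omega), zero_mul]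
      rw [h1, ← h2]
    rw [key]
    ring

lemma v_eq_zero (n : ℕ) (hn : 1 ≤ n) (a b v : Fin n → ℝ)
    (hcop : IsCoprime ((X : ℝ[X]) ^ n + reflect (n - 1) (polOf n a))
      (reflect (n - 1) (polOf n b)))
    (hv : ∀ k, n ≤ k → k < 2 * n →
      ∑ j ∈ Finset.range n, ext' n v j * markov n a b (k + j + 1 - n) = 0) :
    ∀ i, v i = 0 := by
  set ap : ℝ[X] := (X : ℝ[X]) ^ n + reflect (n - 1) (polOf n a) with hap
  set bp : ℝ[X] := reflect (n - 1) (polOf n b) with hbp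
  set abar : ℝ[X] := reflect n ap with habar
  set bbar : ℝ[X] := reflect n bp with hbbar
  set vt : ℝ[X] := reflect (n - 1) (polOf n v) with hvt
  set S : PowerSeries ℝ := (vt : PowerSeries ℝ) * PowerSeries.mk (markov n a b) with hS
  set r : ℝ[X] := ∑ d ∈ Finset.range n, C (PowerSeries.coeff d S) * X ^ d with hr
  -- coefficients of vt
  have coeff_vt : ∀ i, vt.coeff i = if i < n then ext' n v (n - 1 - i) else 0 := by
    intro i
    rw [hvt, coeff_reflect, coeff_polOf]
    by_cases h : i < n
    · rw [if_pos h, revAt_le (by omega : i ≤ n - 1)]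
    · rw [if_neg h, revAt_eq_self_of_lt (by omega : n - 1 < i), ext', dif_neg (by omega)]
  -- vanishing coefficients of S in the band [n, 2n)
  have hScoeff : ∀ d, n ≤ d → d < 2 * n → PowerSeries.coeff d S = 0 := by
    intro d hd1 hd2
    rw [hS, PowerSeries.coeff_mul, Finset.Nat.sum_antidiagonal_eq_sum_range_succ_mk]
    simp only [Polynomial.coeff_coe, PowerSeries.coeff_mk]
    have e1 : ∑ i ∈ Finset.range (d + 1), vt.coeff i * markov n a b (d - i)
        = ∑ i ∈ Finset.range n, vt.coeff i * markov n a b (d - i) := by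
      symm
      apply Finset.sum_subset (Finset.range_subset_range.mpr (by omega))
      intro i _ hi
      rw [Finset.mem_range, not_lt] at hi
      rw [coeff_vt i, if_neg (by omega), zero_mul]
    rw [e1]
    have e2 : ∀ i ∈ Finset.range n, vt.coeff i * markov n a b (d - i)
        = (fun j => ext' n v j * markov n a b (d + j + 1 - n)) (n - 1 - i) := by
      intro i hi
      rw [Finset.mem_range] at hi
      rw [coeff_vt i, if_pos hi]
      congr 2
      omega
    rw [Finset.sum_congr rfl e2]
    exact (Finset.sum_range_reflect
      (fun j => ext' n v j * markov n a b (d + j + 1 - n)) n).trans (hv d hd1 hd2)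
  -- coefficients of r
  have coeff_r : ∀ t, r.coeff t = if t < n then PowerSeries.coeff t S else 0 := by
    intro t
    rw [hr, finset_sum_coeff]
    simp only [coeff_C_mul, coeff_X_pow]
    by_cases ht : t < n
    · rw [if_pos ht, Finset.sum_eq_single t]
      · rw [if_pos rfl, mul_one]
      · intro d _ hd
        rw [if_neg (fun hc => hd hc.symm), mul_zero]
      · intro h
        exact absurd (Finset.mem_range.mpr ht) h
    · rw [if_neg ht]
      apply Finset.sum_eq_zero
      intro d hd
      rw [Finset.mem_range] at hd
      rw [if_neg (by omega), mul_zero]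
  have hdeg_r : r.natDegree ≤ n - 1 := by
    rw [natDegree_le_iff_coeff_eq_zero]
    intro m hm
    rw [coeff_r, if_neg (by omega)]
  have hdeg_vt : vt.natDegree ≤ n - 1 := natDegree_reflect_le (natDegree_polOf_le n hn v)
  have hdeg_ap : ap.natDegree ≤ n := by
    rw [hap]
    refine (natDegree_add_le _ _).trans ?_
    simp only [natDegree_X_pow, max_le_iff]
    exact ⟨le_refl n, (natDegree_reflect_le (natDegree_polOf_le n hn a)).trans (by omega)⟩
  have hdeg_bp : bp.natDegree ≤ n :=
    (natDegree_reflect_le (natDegree_polOf_le n hn b)).trans (by omega)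
  have hdeg_abar : abar.natDegree ≤ n := natDegree_reflect_le hdeg_ap
  have hdeg_bbar : bbar.natDegree ≤ n := natDegree_reflect_le hdeg_bp
  -- X^(2n) divides S - r
  have hdvd2n : (PowerSeries.X : PowerSeries ℝ) ^ (2 * n) ∣ S - (r : ℝ[X]) := by
    rw [PowerSeries.X_pow_dvd_iff]
    intro m hm
    rw [map_sub, Polynomial.coeff_coe, coeff_r]
    by_cases h : m < n
    · rw [if_pos h, sub_self]
    · rw [if_neg h, hScoeff m (by omega) hm, sub_zero]
  -- the power series identity
  have habS : (abar : PowerSeries ℝ) * S = ((vt * bbar : ℝ[X]) : PowerSeries ℝ) := by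
    rw [hS, Polynomial.coe_mul, ← mul_assoc, mul_comm (abar : PowerSeries ℝ) (vt : PowerSeries ℝ),
        mul_assoc]
    congr 1
    exact L1 n hn a b
  -- polynomial identity
  have E1 : abar * r = vt * bbar := by
    ext t
    by_cases ht : t < 2 * n
    · have e : (abar : PowerSeries ℝ) * S
          = ((abar * r : ℝ[X]) : PowerSeries ℝ) + (abar : PowerSeries ℝ) * (S - (r : ℝ[X])) := by
        rw [Polynomial.coe_mul]; ring
      have hz : PowerSeries.coeff (R := ℝ) t ((abar : PowerSeries ℝ) * (S - (r : ℝ[X]))) = 0 := by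
        have : (PowerSeries.X : PowerSeries ℝ) ^ (2 * n)
            ∣ (abar : PowerSeries ℝ) * (S - (r : ℝ[X])) := hdvd2n.mul_left _
        exact (PowerSeries.X_pow_dvd_iff.mp this) t ht
      have h1 : PowerSeries.coeff t ((abar : PowerSeries ℝ) * S)
          = (abar * r).coeff t := by
        rw [e, map_add, hz, add_zero, Polynomial.coeff_coe]
      rw [← h1, habS, Polynomial.coeff_coe]
    · push_neg at ht
      rw [coeff_eq_zero_of_natDegree_lt, coeff_eq_zero_of_natDegree_lt]
      · calc (vt * bbar).natDegree ≤ vt.natDegree + bbar.natDegree := natDegree_mul_le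
          _ < t := by omega
      · calc (abar * r).natDegree ≤ abar.natDegree + r.natDegree := natDegree_mul_le
          _ < t := by omega
  -- reflect back
  have E2 := congrArg (reflect (n + (n - 1))) E1
  rw [reflect_mul abar r hdeg_abar hdeg_r] at E2
  rw [show n + (n - 1) = (n - 1) + n from by omega] at E2
  rw [reflect_mul vt bbar hdeg_vt hdeg_bbar] at E2
  rw [habar, reflect_reflect', hvt, reflect_reflect', hbbar, reflect_reflect'] at E2
  -- coprimality and degrees give polOf n v = 0
  have hdv : ap ∣ polOf n v * bp := Dvd.intro _ E2
  have hdvv : ap ∣ polOf n v := hcop.dvd_of_dvd_mul_right hdv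
  have hdeg_ap_eq : ap.natDegree = n := by
    rw [hap, natDegree_add_eq_left_of_natDegree_lt, natDegree_X_pow]
    rw [natDegree_X_pow]
    exact lt_of_le_of_lt (natDegree_reflect_le (natDegree_polOf_le n hn a)) (by omega)
  have hpv : polOf n v = 0 := by
    by_contra hne
    have := natDegree_le_of_dvd hdvv hne
    have h2 := natDegree_polOf_le n hn v
    omega
  intro i
  have := congrArg (fun p => Polynomial.coeff p i.1) hpv
  simp only [coeff_polOf, coeff_zero] at this
  rw [ext', dif_pos i.isLt, Fin.eta] at this
  exact this

/-- If `a(z) = z^n + a_1 z^{n−1} + ⋯ + a_n` and `b(z) = b_1 z^{n−1} + ⋯ + b_n` are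
coprime, then the pair `(𝒜, ℬ)` of the non-minimal realization is controllable. -/
theorem stmt7 (n : ℕ) (hn : 1 ≤ n) (a b : Fin n → ℝ)
    (hcop : IsCoprime
      ((X : Polynomial ℝ) ^ n + ∑ j : Fin n, C (a j) * X ^ (n - 1 - j.1))
      (∑ j : Fin n, C (b j) * X ^ (n - 1 - j.1))) :
    Controllable (calA n a b) (calB n) := by
  rw [← reflect_polOf n a, ← reflect_polOf n b] at hcop
  unfold Controllable
  set K : Matrix (Fin n ⊕ Fin n) (Fin (Fintype.card (Fin n ⊕ Fin n))) ℝ :=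
    Matrix.of fun i j => ((calA n a b) ^ (j : ℕ)).mulVec (calB n) i with hK
  have hcard : Fintype.card (Fin n ⊕ Fin n) = 2 * n := by
    simp [Fintype.card_sum, two_mul]
  have hinj : Function.Injective (Kᵀ.mulVecLin) := by
    apply (injective_iff_map_eq_zero _).mpr
    intro w hw
    have hdot : ∀ k, k < 2 * n →
        (∑ i : Fin n, markov n a b (k + i.1 + 1 - n) * w (Sum.inl i))
          + (∑ i : Fin n, (if i.1 + k = n - 1 then (1:ℝ) else 0) * w (Sum.inr i)) = 0 := by
      intro k hk
      have hk' : k < Fintype.card (Fin n ⊕ Fin n) := by rw [hcard]; exact hk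
      have h0 := congrFun hw (⟨k, hk'⟩ : Fin (Fintype.card (Fin n ⊕ Fin n)))
      rw [Matrix.mulVecLin_apply] at h0
      simp only [Pi.zero_apply] at h0
      have hexp : (Kᵀ *ᵥ w) (⟨k, hk'⟩ : Fin (Fintype.card (Fin n ⊕ Fin n)))
          = (∑ i : Fin n, markov n a b (k + i.1 + 1 - n) * w (Sum.inl i))
            + (∑ i : Fin n, (if i.1 + k = n - 1 then (1:ℝ) else 0) * w (Sum.inr i)) := by
        show ∑ i : (Fin n ⊕ Fin n), Kᵀ _ i * w i = _
        rw [Fintype.sum_sum_type]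
        congr 1
        · apply Finset.sum_congr rfl
          intro i _
          rw [Matrix.transpose_apply, hK]
          show (((calA n a b) ^ k).mulVec (calB n) (Sum.inl i)) * w (Sum.inl i) = _
          rw [krylov n hn a b k, Sum.elim_inl]
        · apply Finset.sum_congr rfl
          intro i _
          rw [Matrix.transpose_apply, hK]
          show (((calA n a b) ^ k).mulVec (calB n) (Sum.inr i)) * w (Sum.inr i) = _
          rw [krylov n hn a b k, Sum.elim_inr]
      rw [hexp] at h0
      exact h0
    have hvv : ∀ i, w (Sum.inl i) = 0 := by
      have hv : ∀ k, n ≤ k → k < 2 * n →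
          ∑ j ∈ Finset.range n, ext' n (fun i => w (Sum.inl i)) j
            * markov n a b (k + j + 1 - n) = 0 := by
        intro k hk1 hk2
        have h0 := hdot k hk2
        have h1 : (∑ i : Fin n, (if i.1 + k = n - 1 then (1:ℝ) else 0) * w (Sum.inr i)) = 0 := by
          apply Finset.sum_eq_zero
          intro i _
          rw [if_neg (by omega), zero_mul]
        rw [h1, add_zero] at h0
        rw [← h0, ← Fin.sum_univ_eq_sum_range
          (fun j => ext' n (fun i => w (Sum.inl i)) j * markov n a b (k + j + 1 - n)) n]
        apply Finset.sum_congr rfl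
        intro i _
        rw [ext', dif_pos i.isLt, Fin.eta, mul_comm]
      intro i
      have := v_eq_zero n hn a b (fun i => w (Sum.inl i)) hcop hv i
      exact this
    have huu : ∀ i, w (Sum.inr i) = 0 := by
      intro i
      have hk : n - 1 - i.1 < 2 * n := by omega
      have h0 := hdot (n - 1 - i.1) hk
      have h1 : (∑ j : Fin n, markov n a b ((n - 1 - i.1) + j.1 + 1 - n) * w (Sum.inl j)) = 0 := by
        apply Finset.sum_eq_zero
        intro j _
        rw [hvv j, mul_zero]
      rw [h1, zero_add] at h0
      rw [← h0]
      symm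
      rw [Finset.sum_eq_single i]
      · rw [if_pos (by omega), one_mul]
      · intro j _ hj
        rw [if_neg, zero_mul]
        intro hc
        exact hj (Fin.ext (by omega))
      · intro h; exact absurd (Finset.mem_univ _) h
    funext i
    cases i with
    | inl i => exact hvv i
    | inr i => exact huu i
  rw [← Matrix.rank_transpose K, Matrix.rank, LinearMap.finrank_range_of_inj hinj,
      Module.finrank_pi]
end

section
/- Suppose the SISO sequence pair (u, y) satisfies the ARX relation y(t) = −∑_{j=1}^n a_j y(t−j) + ∑_{j=1}^n b_j u(t−j) for all t, and suppose a vector ḡ ∈ ℝ^T satisfies y(t−k) = ∑_{i=1}^T y_d(t_0−k+i) ḡ_i for k = n̄, n̄−1, …, n̄−n+1 and u(t−k) = ∑_{i=1}^T u_d(t_0−k+i) ḡ_i for k = n̄, …, 1, 0 (with appropriate offset t_0 = −n̄−1), where the data (u_d, y_d) satisfies the same ARX relation. Then additionally y(t−n̄+n) = ∑_{i=1}^T y_d(−n̄+n−1+i) ḡ_i. -/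
/-- Inductive step of Lemma 2: if a linear combination `ḡ` of the data trajectory matches
`n` consecutive past outputs `y(t−n̄),…,y(t−n̄+n−1)` and all required inputs
`u(t−n̄),…,u(t)`, and both the online trajectory `(u,y)` and the data trajectory
`(u_d,y_d)` satisfy the same ARX recursion of order `n`, then `ḡ` also matches the
next output `y(t−n̄+n)`. -/
theorem stmt9 (n nb T : ℕ) (hn : 1 ≤ n) (hnb : n ≤ nb)
    (a b : Fin n → ℝ) (u y ud yd : ℤ → ℝ)
    (hARX : ∀ t : ℤ, y t = -∑ j : Fin n, a j * y (t - 1 - (j.1 : ℤ))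
      + ∑ j : Fin n, b j * u (t - 1 - (j.1 : ℤ)))
    (hARXd : ∀ t : ℤ, yd t = -∑ j : Fin n, a j * yd (t - 1 - (j.1 : ℤ))
      + ∑ j : Fin n, b j * ud (t - 1 - (j.1 : ℤ)))
    (t : ℤ) (g : Fin T → ℝ)
    (hy : ∀ j : ℕ, j < n →
      y (t - (nb : ℤ) + (j : ℤ)) = ∑ i : Fin T, yd (-(nb : ℤ) + (j : ℤ) + (i.1 : ℤ)) * g i)
    (hu : ∀ j : ℕ, j ≤ nb →
      u (t - (nb : ℤ) + (j : ℤ)) = ∑ i : Fin T, ud (-(nb : ℤ) + (j : ℤ) + (i.1 : ℤ)) * g i) :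
    y (t - (nb : ℤ) + (n : ℤ)) = ∑ i : Fin T, yd (-(nb : ℤ) + (n : ℤ) + (i.1 : ℤ)) * g i := by
  have key : ∀ j : Fin n,
      y (t - (nb : ℤ) + (n : ℤ) - 1 - (j.1 : ℤ))
        = ∑ i : Fin T, yd (-(nb : ℤ) + (n : ℤ) - 1 - (j.1 : ℤ) + (i.1 : ℤ)) * g i := by
    intro j
    have hj : n - 1 - j.1 < n := by omega
    have hc : ((n - 1 - j.1 : ℕ) : ℤ) = (n : ℤ) - 1 - (j.1 : ℤ) := by
      have := j.2; omega
    have h := hy (n - 1 - j.1) hj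
    rw [hc] at h
    have e1 : t - (nb : ℤ) + (n : ℤ) - 1 - (j.1 : ℤ)
        = t - (nb : ℤ) + ((n : ℤ) - 1 - (j.1 : ℤ)) := by ring
    rw [e1, h]
    apply Finset.sum_congr rfl
    intro i _
    congr 1
    congr 1
    ring
  have keyu : ∀ j : Fin n,
      u (t - (nb : ℤ) + (n : ℤ) - 1 - (j.1 : ℤ))
        = ∑ i : Fin T, ud (-(nb : ℤ) + (n : ℤ) - 1 - (j.1 : ℤ) + (i.1 : ℤ)) * g i := by
    intro j
    have hj : n - 1 - j.1 ≤ nb := by omega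
    have hc : ((n - 1 - j.1 : ℕ) : ℤ) = (n : ℤ) - 1 - (j.1 : ℤ) := by
      have := j.2; omega
    have h := hu (n - 1 - j.1) hj
    rw [hc] at h
    have e1 : t - (nb : ℤ) + (n : ℤ) - 1 - (j.1 : ℤ)
        = t - (nb : ℤ) + ((n : ℤ) - 1 - (j.1 : ℤ)) := by ring
    rw [e1, h]
    apply Finset.sum_congr rfl
    intro i _
    congr 1
    congr 1
    ring
  rw [hARX (t - (nb : ℤ) + (n : ℤ))]
  have hrhs : ∑ i : Fin T, yd (-(nb : ℤ) + (n : ℤ) + (i.1 : ℤ)) * g i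
      = ∑ i : Fin T, (-∑ j : Fin n, a j * yd (-(nb : ℤ) + (n : ℤ) + (i.1 : ℤ) - 1 - (j.1 : ℤ))
          + ∑ j : Fin n, b j * ud (-(nb : ℤ) + (n : ℤ) + (i.1 : ℤ) - 1 - (j.1 : ℤ))) * g i :=
    Finset.sum_congr rfl (fun i _ => by rw [hARXd])
  rw [hrhs]
  simp only [key, keyu, Finset.mul_sum, add_mul, neg_mul, Finset.sum_mul, Finset.sum_add_distrib, Finset.sum_neg_distrib]
  congr 1
  · rw [neg_inj, Finset.sum_comm]
    apply Finset.sum_congr rfl; intro j _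
    apply Finset.sum_congr rfl; intro i _
    ring_nf
  · rw [Finset.sum_comm]
    apply Finset.sum_congr rfl; intro j _
    apply Finset.sum_congr rfl; intro i _
    ring_nf
end

section
/- (Lemma 2) Consider a SISO LTI system of unknown order n ≤ n̄ satisfying y(t) = −∑_{j=1}^n a_j y(t−j) + ∑_{j=1}^n b_j u(t−j), with coprime polynomials z^n + a_1 z^{n−1} + ⋯ + a_n and b_1 z^{n−1} + ⋯ + b_n. Let (u_d, y_d) be data from this system with u_d persistently exciting of order 2n̄+1 over T ≥ 4n̄+1 samples, and define χ̄(t) = col(y(t−n̄),…,y(t−1), u(t−n̄),…,u(t−1)) ∈ ℝ^{2n̄}, and the data matrices X̄₋ = [χ̄_d(0),…,χ̄_d(T−1)], U₋ = [u_d(0),…,u_d(T−1)]. Then for every t and every trajectory (u, y) of the system, there exists ḡ(t) ∈ ℝ^T such that col(χ̄(t), u(t)) = col(X̄₋, U₋) ḡ(t). -/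
open Polynomial

/-- Extended state `χ̄(t) = col(y(t−n̄),…,y(t−1),u(t−n̄),…,u(t−1)) ∈ ℝ^{2n̄}`. -/
def chi (n : ℕ) (u y : ℤ → ℝ) (t : ℤ) : Fin (2 * n) → ℝ :=
  fun i => if i.1 < n then y (t - (n : ℤ) + (i.1 : ℤ)) else u (t - (n : ℤ) + ((i.1 - n : ℕ) : ℤ))

/-- Hankel matrix of a scalar ℤ-signal with `L` rows and `N` columns, window starting at `t0`. -/
def HankelZ (u : ℤ → ℝ) (t0 : ℤ) (L N : ℕ) : Matrix (Fin L) (Fin N) ℝ :=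
  Matrix.of fun i j => u (t0 + (i.1 : ℤ) + (j.1 : ℤ))

/-! ### Action of polynomials on ℤ-indexed signals (shift operator calculus) -/

noncomputable def act (P : Polynomial ℝ) (w : ℤ → ℝ) (s : ℤ) : ℝ :=
  ∑ k ∈ Finset.range (P.natDegree + 1), P.coeff k * w (s + (k : ℤ))

lemma act_eq_sum_range {P : Polynomial ℝ} {N : ℕ} (h : P.natDegree < N) (w : ℤ → ℝ) (s : ℤ) :
    act P w s = ∑ k ∈ Finset.range N, P.coeff k * w (s + (k : ℤ)) := by
  apply Finset.sum_subset (Finset.range_subset_range.2 h)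
  intro k _ hk
  rw [Finset.mem_range, not_lt] at hk
  rw [P.coeff_eq_zero_of_natDegree_lt (by omega), zero_mul]

lemma act_zero (w : ℤ → ℝ) (s : ℤ) : act (0 : Polynomial ℝ) w s = 0 := by
  simp [act]

lemma act_add (P Q : Polynomial ℝ) (w : ℤ → ℝ) (s : ℤ) :
    act (P + Q) w s = act P w s + act Q w s := by
  have hN : max P.natDegree Q.natDegree < max P.natDegree Q.natDegree + 1 := Nat.lt_succ_self _
  rw [act_eq_sum_range (lt_of_le_of_lt (natDegree_add_le P Q) hN),
    act_eq_sum_range (lt_of_le_of_lt (le_max_left _ _) hN),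
    act_eq_sum_range (lt_of_le_of_lt (le_max_right _ _) hN), ← Finset.sum_add_distrib]
  refine Finset.sum_congr rfl fun k _ => ?_
  rw [coeff_add, add_mul]

lemma act_neg (P : Polynomial ℝ) (w : ℤ → ℝ) (s : ℤ) : act (-P) w s = -act P w s := by
  simp [act, natDegree_neg, neg_mul, ← Finset.sum_neg_distrib]

lemma act_monomial (k : ℕ) (c : ℝ) (w : ℤ → ℝ) (s : ℤ) :
    act (monomial k c) w s = c * w (s + (k : ℤ)) := by
  rcases eq_or_ne c 0 with rfl | hc
  · simp [act]
  · rw [act_eq_sum_range (N := k + 1) (by rw [natDegree_monomial_eq k hc]; omega)]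
    rw [Finset.sum_eq_single k]
    · rw [coeff_monomial, if_pos rfl]
    · intro b _ hb; rw [coeff_monomial, if_neg (Ne.symm hb), zero_mul]
    · intro h; exact absurd (Finset.self_mem_range_succ k) h

lemma act_sum {ι : Type*} [DecidableEq ι] (s : Finset ι) (f : ι → Polynomial ℝ) (w : ℤ → ℝ)
    (t : ℤ) : act (∑ i ∈ s, f i) w t = ∑ i ∈ s, act (f i) w t := by
  induction s using Finset.induction_on with
  | empty => simp [act_zero]
  | insert i s' h ih => rw [Finset.sum_insert h, act_add, ih, Finset.sum_insert h]

lemma act_mul (P Q : Polynomial ℝ) (w : ℤ → ℝ) (s : ℤ) :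
    act (P * Q) w s = act P (fun s' => act Q w s') s := by
  induction P using Polynomial.induction_on' generalizing s with
  | add P1 P2 h1 h2 => rw [add_mul, act_add, h1, h2, act_add]
  | monomial k a =>
    induction Q using Polynomial.induction_on' generalizing s with
    | add Q1 Q2 g1 g2 =>
      rw [mul_add, act_add]
      rw [g1, g2]
      simp only [act_monomial, act_add]
      ring
    | monomial l b =>
      rw [monomial_mul_monomial, act_monomial]
      simp only [act_monomial]
      rw [show s + ((k + l : ℕ) : ℤ) = s + (k:ℤ) + (l:ℤ) by push_cast; ring]
      ring

lemma act_comm (P Q : Polynomial ℝ) (w : ℤ → ℝ) (s : ℤ) :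
    act P (fun s' => act Q w s') s = act Q (fun s' => act P w s') s := by
  rw [← act_mul, mul_comm, act_mul]

lemma act_signal_add (P : Polynomial ℝ) (w1 w2 : ℤ → ℝ) (s : ℤ) :
    act P (fun x => w1 x + w2 x) s = act P w1 s + act P w2 s := by
  unfold act
  rw [← Finset.sum_add_distrib]
  exact Finset.sum_congr rfl fun k _ => by ring

/-- The ARX recursion in polynomial-action form: `A(σ) y = B(σ) u`. -/
lemma actA_eq_actB {n : ℕ} (a b : Fin n → ℝ) (wu wy : ℤ → ℝ)
    (hARX : ∀ t : ℤ, wy t = -∑ j : Fin n, a j * wy (t - 1 - (j.1 : ℤ))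
      + ∑ j : Fin n, b j * wu (t - 1 - (j.1 : ℤ))) (s : ℤ) :
    act ((X : Polynomial ℝ) ^ n + ∑ j : Fin n, C (a j) * X ^ (n - 1 - j.1)) wy s
      = act (∑ j : Fin n, C (b j) * X ^ (n - 1 - j.1)) wu s := by
  have key := hARX (s + n)
  rw [act_add, act_sum, act_sum]
  simp only [C_mul_X_pow_eq_monomial, act_monomial]
  have hX : act ((X : Polynomial ℝ) ^ n) wy s = wy (s + n) := by
    rw [X_pow_eq_monomial, act_monomial, one_mul]
  rw [hX]
  have h1 : ∀ j : Fin n, (s + ((n - 1 - j.1 : ℕ) : ℤ)) = (s + n) - 1 - (j.1 : ℤ) := fun j => by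
    have := j.2; omega
  calc wy (s + n) + ∑ j : Fin n, a j * wy (s + ((n - 1 - j.1 : ℕ) : ℤ))
      = wy (s + n) + ∑ j : Fin n, a j * wy ((s + n) - 1 - (j.1 : ℤ)) := by
        congr 1; exact Finset.sum_congr rfl fun j _ => by rw [h1 j]
    _ = ∑ j : Fin n, b j * wu ((s + n) - 1 - (j.1 : ℤ)) := by rw [key]; ring
    _ = ∑ j : Fin n, b j * wu (s + ((n - 1 - j.1 : ℕ) : ℤ)) :=
        Finset.sum_congr rfl fun j _ => by rw [h1 j]

lemma sum_range_split (f : ℕ → ℝ) (m k : ℕ) :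
    ∑ i ∈ Finset.range (m + k), f i
      = (∑ i ∈ Finset.range m, f i) + ∑ i ∈ Finset.range k, f (m + i) := by
  have h2 : ∑ i ∈ Finset.Ico m (m + k), f i = ∑ i ∈ Finset.range k, f (m + i) := by
    rw [Finset.sum_Ico_eq_sum_range]
    have h3 : m + k - m = k := by omega
    rw [h3]
  rw [Finset.range_eq_Ico,
    ← Finset.sum_Ico_consecutive f (Nat.zero_le m) (Nat.le_add_right m k), h2,
    Nat.Ico_zero_eq_range]

/-- Core orthogonality lemma. -/
lemma core (n nb T : ℕ) (hn : 1 ≤ n) (hnb : n ≤ nb) (hT : 4 * nb + 1 ≤ T)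
    (a b : Fin n → ℝ)
    (hcop : IsCoprime
      ((X : Polynomial ℝ) ^ n + ∑ j : Fin n, C (a j) * X ^ (n - 1 - j.1))
      (∑ j : Fin n, C (b j) * X ^ (n - 1 - j.1)))
    (ud yd : ℤ → ℝ)
    (hARXd : ∀ t : ℤ, yd t = -∑ j : Fin n, a j * yd (t - 1 - (j.1 : ℤ))
      + ∑ j : Fin n, b j * ud (t - 1 - (j.1 : ℤ)))
    (hPE : (HankelZ ud (-(nb : ℤ)) (2 * nb + 1) (T + nb - (2 * nb + 1) + 1)).rank = 2 * nb + 1)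
    (u y : ℤ → ℝ)
    (hARX : ∀ t : ℤ, y t = -∑ j : Fin n, a j * y (t - 1 - (j.1 : ℤ))
      + ∑ j : Fin n, b j * u (t - 1 - (j.1 : ℤ)))
    (t : ℤ) (ξy : Fin nb → ℝ) (ξu : Fin (nb + 1) → ℝ)
    (hd : ∀ j : Fin T,
      (∑ k : Fin nb, ξy k * yd ((j.1 : ℤ) - (nb : ℤ) + (k.1 : ℤ)))
        + ∑ k : Fin (nb + 1), ξu k * ud ((j.1 : ℤ) - (nb : ℤ) + (k.1 : ℤ)) = 0) :
    (∑ k : Fin nb, ξy k * y (t - (nb : ℤ) + (k.1 : ℤ)))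
      + ∑ k : Fin (nb + 1), ξu k * u (t - (nb : ℤ) + (k.1 : ℤ)) = 0 := by
  classical
  have hnb1 : 1 ≤ nb := hn.trans hnb
  set A : Polynomial ℝ := (X : Polynomial ℝ) ^ n + ∑ j : Fin n, C (a j) * X ^ (n - 1 - j.1)
    with hA_def
  set B : Polynomial ℝ := ∑ j : Fin n, C (b j) * X ^ (n - 1 - j.1) with hB_def
  set p : Polynomial ℝ := ∑ k : Fin nb, C (ξy k) * X ^ (k.1) with hp_def
  set q : Polynomial ℝ := ∑ k : Fin (nb + 1), C (ξu k) * X ^ (k.1) with hq_def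
  have hactp : ∀ (w : ℤ → ℝ) (s : ℤ), act p w s = ∑ k : Fin nb, ξy k * w (s + (k.1 : ℤ)) := by
    intro w s
    rw [hp_def, act_sum]
    exact Finset.sum_congr rfl fun k _ => by rw [C_mul_X_pow_eq_monomial, act_monomial]
  have hactq : ∀ (w : ℤ → ℝ) (s : ℤ),
      act q w s = ∑ k : Fin (nb + 1), ξu k * w (s + (k.1 : ℤ)) := by
    intro w s
    rw [hq_def, act_sum]
    exact Finset.sum_congr rfl fun k _ => by rw [C_mul_X_pow_eq_monomial, act_monomial]
  have hpdeg : p.natDegree < nb := by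
    have h1 : p.natDegree ≤ nb - 1 := natDegree_sum_le_of_forall_le _ _
      (fun k _ => (natDegree_C_mul_X_pow_le _ _).trans (by have := k.2; omega))
    omega
  have hqdeg : q.natDegree ≤ nb := natDegree_sum_le_of_forall_le _ _
    (fun k _ => (natDegree_C_mul_X_pow_le _ _).trans (by have := k.2; omega))
  have hAdeg : A.natDegree ≤ n := by
    rw [hA_def]
    refine (natDegree_add_le _ _).trans (max_le (by simp) ?_)
    exact natDegree_sum_le_of_forall_le _ _
      (fun j _ => (natDegree_C_mul_X_pow_le _ _).trans (by omega))
  have hBdeg : B.natDegree ≤ n := by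
    rw [hB_def]
    exact natDegree_sum_le_of_forall_le _ _
      (fun j _ => (natDegree_C_mul_X_pow_le _ _).trans (by omega))
  -- the data window identity
  have hFd : ∀ s : ℤ, -(nb : ℤ) ≤ s → s + nb ≤ (T : ℤ) - 1 →
      act p yd s + act q ud s = 0 := by
    intro s h1 h2
    have hj0 : 0 ≤ s + nb := by omega
    have hjT : (s + nb).toNat < T := by omega
    have h3 := hd ⟨(s + nb).toNat, hjT⟩
    have hval : (((⟨(s + nb).toNat, hjT⟩ : Fin T).1 : ℕ) : ℤ) = s + nb := Int.toNat_of_nonneg hj0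
    rw [hval] at h3
    have e : ∀ k : ℤ, s + (nb : ℤ) - (nb : ℤ) + k = s + k := fun k => by ring
    simp only [e] at h3
    rw [hactp, hactq]
    exact h3
  -- the polynomial r = p*B + q*A kills ud on a long window
  have hwin : ∀ s : ℤ, -(nb : ℤ) ≤ s → s + 2 * nb ≤ (T : ℤ) - 1 →
      act (p * B + q * A) ud s = 0 := by
    intro s h1 h2
    have hkey : act (p * B + q * A) ud s
        = act A (fun s' => act p yd s' + act q ud s') s := by
      rw [act_add, act_mul, act_mul]
      have hAB : (fun s' => act B ud s') = fun s' => act A yd s' :=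
        funext fun s' => (actA_eq_actB a b ud yd hARXd s').symm
      rw [hAB, act_comm p A yd, act_comm q A ud]
      exact (act_signal_add A (fun s' => act p yd s') (fun s' => act q ud s') s).symm
    rw [hkey, act_eq_sum_range (lt_of_le_of_lt hAdeg (Nat.lt_succ_self n))]
    apply Finset.sum_eq_zero
    intro k hk
    rw [Finset.mem_range] at hk
    show A.coeff k * (act p yd (s + k) + act q ud (s + k)) = 0
    rw [hFd (s + k) (by omega) (by omega), mul_zero]
  have hrdeg : (p * B + q * A).natDegree < 2 * nb + 1 := by
    have h1 := natDegree_mul_le (p := p) (q := B)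
    have h2 := natDegree_mul_le (p := q) (q := A)
    exact lt_of_le_of_lt (natDegree_add_le _ _) (max_lt (by omega) (by omega))
  -- PE kills r
  have hrange : LinearMap.range
      (HankelZ ud (-(nb : ℤ)) (2 * nb + 1) (T + nb - (2 * nb + 1) + 1)).mulVecLin = ⊤ := by
    apply Submodule.eq_top_of_finrank_eq
    rw [Module.finrank_fintype_fun_eq_card, Fintype.card_fin]
    exact hPE
  have hcoeff : ∀ i : Fin (2 * nb + 1), (p * B + q * A).coeff i.1 = 0 := by
    intro i
    set H := HankelZ ud (-(nb : ℤ)) (2 * nb + 1) (T + nb - (2 * nb + 1) + 1) with hH_def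
    set rv := (fun k : Fin (2 * nb + 1) => (p * B + q * A).coeff k.1) with hrv_def
    have hmem : (Pi.single i (1 : ℝ)) ∈ LinearMap.range H.mulVecLin := by
      rw [hrange]; trivial
    obtain ⟨x, hx⟩ := hmem
    have hz : Matrix.vecMul rv H = 0 := by
      funext jj
      have hvm : Matrix.vecMul rv H jj = ∑ k : Fin (2 * nb + 1), rv k * H k jj := rfl
      have hact : ∑ k : Fin (2 * nb + 1), rv k * H k jj
          = act (p * B + q * A) ud (-(nb : ℤ) + jj.1) := by
        rw [act_eq_sum_range hrdeg, ← Fin.sum_univ_eq_sum_range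
          (fun k => (p * B + q * A).coeff k * ud (-(nb : ℤ) + (jj.1 : ℤ) + k)) (2 * nb + 1)]
        refine Finset.sum_congr rfl fun k _ => ?_
        rw [hrv_def, hH_def]
        show (p * B + q * A).coeff k.1 * ud (-(nb : ℤ) + (k.1 : ℤ) + (jj.1 : ℤ))
          = (p * B + q * A).coeff k.1 * ud (-(nb : ℤ) + (jj.1 : ℤ) + (k.1 : ℤ))
        rw [show -(nb : ℤ) + (k.1 : ℤ) + (jj.1 : ℤ) = -(nb : ℤ) + (jj.1 : ℤ) + (k.1 : ℤ) by ring]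
      have hjj := jj.2
      rw [Pi.zero_apply, hvm, hact]
      exact hwin _ (by omega) (by omega)
    have hdot : dotProduct rv (H.mulVec x) = 0 := by
      rw [Matrix.dotProduct_mulVec, hz, zero_dotProduct]
    rw [Matrix.mulVecLin_apply] at hx
    rw [hx] at hdot
    rw [dotProduct_single, mul_one] at hdot
    exact hdot
  have hr0 : p * B + q * A = 0 := Polynomial.ext fun k => by
    rw [coeff_zero]
    by_cases hk : k < 2 * nb + 1
    · exact hcoeff ⟨k, hk⟩
    · exact coeff_eq_zero_of_natDegree_lt (by omega)
  -- coprimality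
  have hA1 : A.coeff n = 1 := by
    rw [hA_def, coeff_add, coeff_X_pow, if_pos rfl, finset_sum_coeff]
    rw [Finset.sum_eq_zero fun j _ => by
      rw [coeff_C_mul, coeff_X_pow, if_neg (by have := j.2; omega), mul_zero]]
    rw [add_zero]
  have hAne : A ≠ 0 := fun h => by
    rw [h, coeff_zero] at hA1; exact one_ne_zero hA1.symm
  have hdvd : A ∣ p * B := ⟨-q, by linear_combination hr0⟩
  obtain ⟨c, hc⟩ := hcop.dvd_of_dvd_mul_right hdvd
  have hq2 : q = -(c * B) := by
    have hA2 : A * (c * B + q) = 0 := by linear_combination hr0 - B * hc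
    rcases mul_eq_zero.mp hA2 with h | h
    · exact absurd h hAne
    · linear_combination h
  -- conclude for the online trajectory
  rw [← hactp y (t - (nb : ℤ)), ← hactq u (t - (nb : ℤ)), hc, hq2]
  rw [show A * c = c * A from mul_comm A c, act_mul, act_neg, act_mul]
  have hABu : (fun s' => act A y s') = fun s' => act B u s' :=
    funext fun s' => actA_eq_actB a b u y hARX s'
  rw [hABu]
  ring


lemma euclid_sum_apply {m : ℕ} {ι : Type*} [DecidableEq ι] (s : Finset ι)
    (f : ι → EuclideanSpace ℝ (Fin m)) (i : Fin m) :
    (∑ j ∈ s, f j) i = ∑ j ∈ s, f j i := by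
  induction s using Finset.induction_on with
  | empty => rfl
  | insert a s' h ih =>
    rw [Finset.sum_insert h, Finset.sum_insert h, ← ih]
    rfl

/-- Splitting the `Fin (2*nb+1)` dot product into output and input parts. -/
lemma dot_split (nb : ℕ) (wu wy : ℤ → ℝ) (t : ℤ) (ξ : Fin (2 * nb + 1) → ℝ) :
    ∑ i : Fin (2 * nb + 1),
        ξ i * (if h : i.1 < 2 * nb then chi nb wu wy t ⟨i.1, h⟩ else wu t)
      = (∑ k : Fin nb, ξ ⟨k.1, by have := k.2; omega⟩ * wy (t - (nb : ℤ) + (k.1 : ℤ)))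
        + ∑ k : Fin (nb + 1), ξ ⟨nb + k.1, by have := k.2; omega⟩ * wu (t - (nb : ℤ) + (k.1 : ℤ)) := by
  classical
  have key : ∀ (N : ℕ) (G : Fin N → ℝ),
      ∑ k : Fin N, G k
        = ∑ k ∈ Finset.range N, (if h : k < N then G ⟨k, h⟩ else 0) := by
    intro N G
    rw [← Fin.sum_univ_eq_sum_range (fun k => if h : k < N then G ⟨k, h⟩ else 0) N]
    exact Finset.sum_congr rfl fun k _ => by rw [dif_pos k.2]
  rw [key (2 * nb + 1) _, key nb _, key (nb + 1) _]
  have hsplit := sum_range_split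
    (fun k => if h : k < 2 * nb + 1 then
      ξ ⟨k, h⟩ * (if h2 : k < 2 * nb then chi nb wu wy t ⟨k, h2⟩ else wu t) else 0) nb (nb + 1)
  rw [show nb + (nb + 1) = 2 * nb + 1 by omega] at hsplit
  rw [hsplit]
  congr 1
  · refine Finset.sum_congr rfl fun k hk => ?_
    rw [Finset.mem_range] at hk
    rw [dif_pos (show k < 2 * nb + 1 by omega), dif_pos hk,
      dif_pos (show k < 2 * nb by omega)]
    show ξ ⟨k, _⟩ * chi nb wu wy t ⟨k, _⟩ = ξ ⟨k, _⟩ * wy (t - (nb : ℤ) + (k : ℤ))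
    rw [chi, if_pos (show k < nb from hk)]
  · refine Finset.sum_congr rfl fun k hk => ?_
    rw [Finset.mem_range] at hk
    rw [dif_pos (show nb + k < 2 * nb + 1 by omega), dif_pos hk]
    by_cases hknb : k < nb
    · rw [dif_pos (show nb + k < 2 * nb by omega)]
      show ξ ⟨nb + k, _⟩ * chi nb wu wy t ⟨nb + k, _⟩ = ξ ⟨nb + k, _⟩ * wu (t - (nb : ℤ) + (k : ℤ))
      rw [chi, if_neg (show ¬ nb + k < nb by omega)]
      congr 2
      have : nb + k - nb = k := by omega
      rw [this]
    · have hkeq : k = nb := by omega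
      rw [dif_neg (show ¬ nb + k < 2 * nb by omega)]
      show ξ ⟨nb + k, _⟩ * wu t = ξ ⟨nb + k, _⟩ * wu (t - (nb : ℤ) + (k : ℤ))
      congr 2
      rw [hkeq]
      ring

/-- Lemma 2: for a SISO LTI system of unknown order `n ≤ n̄` with coprime numerator and
denominator polynomials, if the offline input `u_d` is persistently exciting of order
`2n̄+1` over `T ≥ 4n̄+1` samples, then for every time `t` and every trajectory `(u,y)`
of the system there is `ḡ(t)` with `col(χ̄(t), u(t)) = col(X̄₋, U₋) ḡ(t)`. -/
theorem stmt10 (n nb T : ℕ) (hn : 1 ≤ n) (hnb : n ≤ nb) (hT : 4 * nb + 1 ≤ T)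
    (a b : Fin n → ℝ)
    (hcop : IsCoprime
      ((X : Polynomial ℝ) ^ n + ∑ j : Fin n, C (a j) * X ^ (n - 1 - j.1))
      (∑ j : Fin n, C (b j) * X ^ (n - 1 - j.1)))
    (ud yd : ℤ → ℝ)
    (hARXd : ∀ t : ℤ, yd t = -∑ j : Fin n, a j * yd (t - 1 - (j.1 : ℤ))
      + ∑ j : Fin n, b j * ud (t - 1 - (j.1 : ℤ)))
    (hPE : (HankelZ ud (-(nb : ℤ)) (2 * nb + 1) (T + nb - (2 * nb + 1) + 1)).rank = 2 * nb + 1)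
    (u y : ℤ → ℝ)
    (hARX : ∀ t : ℤ, y t = -∑ j : Fin n, a j * y (t - 1 - (j.1 : ℤ))
      + ∑ j : Fin n, b j * u (t - 1 - (j.1 : ℤ)))
    (t : ℤ) :
    ∃ g : Fin T → ℝ,
      (∀ i : Fin (2 * nb), chi nb u y t i = ∑ j : Fin T, chi nb ud yd (j.1 : ℤ) i * g j) ∧
      u t = ∑ j : Fin T, ud (j.1 : ℤ) * g j := by
  classical
  set v : EuclideanSpace ℝ (Fin (2 * nb + 1)) :=
    WithLp.toLp 2 (fun i : Fin (2 * nb + 1) => if h : i.1 < 2 * nb then chi nb u y t ⟨i.1, h⟩ else u t) with hv_def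
  set D : Fin T → EuclideanSpace ℝ (Fin (2 * nb + 1)) :=
    (fun j => WithLp.toLp 2 (fun i : Fin (2 * nb + 1) => if h : i.1 < 2 * nb then chi nb ud yd (j.1 : ℤ) ⟨i.1, h⟩ else ud (j.1 : ℤ)))
    with hD_def
  have hvmem : v ∈ Submodule.span ℝ (Set.range D) := by
    set S := Submodule.span ℝ (Set.range D) with hS_def
    rw [← Submodule.orthogonal_orthogonal S, Submodule.mem_orthogonal]
    intro ξ hξ
    have hcols : ∀ j : Fin T, (∑ i : Fin (2 * nb + 1), ξ i * D j i) = 0 := by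
      intro j
      have h1 : D j ∈ S := Submodule.subset_span ⟨j, rfl⟩
      have h3 : (inner ℝ (D j) ξ : ℝ) = 0 := (Submodule.mem_orthogonal S ξ).mp hξ (D j) h1
      rw [PiLp.inner_apply] at h3
      simpa [RCLike.inner_apply] using h3
    have hinner : (inner ℝ ξ v : ℝ) = ∑ i : Fin (2 * nb + 1), ξ i * v i := by
      rw [real_inner_comm, PiLp.inner_apply]
      simp [RCLike.inner_apply]
    rw [hinner]
    have hgoal : ∑ i : Fin (2 * nb + 1), ξ i * v i
        = (∑ k : Fin nb, ξ ⟨k.1, by have := k.2; omega⟩ * y (t - (nb : ℤ) + (k.1 : ℤ)))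
          + ∑ k : Fin (nb + 1), ξ ⟨nb + k.1, by have := k.2; omega⟩
              * u (t - (nb : ℤ) + (k.1 : ℤ)) := by
      rw [hv_def]
      exact dot_split nb u y t ξ
    rw [hgoal]
    refine core n nb T hn hnb hT a b hcop ud yd hARXd hPE u y hARX t
      (fun k => ξ ⟨k.1, by have := k.2; omega⟩)
      (fun k => ξ ⟨nb + k.1, by have := k.2; omega⟩) ?_
    intro j
    have h4 := hcols j
    rw [hD_def] at h4
    rw [← dot_split nb ud yd ((j.1 : ℕ) : ℤ) ξ]
    exact h4
  rw [Submodule.mem_span_range_iff_exists_fun] at hvmem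
  obtain ⟨g, hg⟩ := hvmem
  have happ : ∀ i : Fin (2 * nb + 1), (∑ j : Fin T, g j * D j i) = v i := by
    intro i
    have h1 := congrArg (fun w : EuclideanSpace ℝ (Fin (2 * nb + 1)) => w i) hg
    rw [← h1, euclid_sum_apply]
    rfl
  refine ⟨g, ?_, ?_⟩
  · intro i
    have h2 : i.1 < 2 * nb + 1 := by have := i.2; omega
    have h3 := happ ⟨i.1, h2⟩
    rw [hv_def, hD_def] at h3
    simp only [dif_pos i.2] at h3
    simp only [Fin.eta] at h3
    rw [← h3]
    exact Finset.sum_congr rfl fun j _ => by ring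
  · have h3 := happ ⟨2 * nb, by omega⟩
    rw [hv_def, hD_def] at h3
    simp only [dif_neg (lt_irrefl (2 * nb))] at h3
    rw [← h3]
    exact Finset.sum_congr rfl fun j _ => by ring
end

section
/- (Theorem 1) Under the hypotheses of Lemma 2 (u_d persistently exciting of order 2n̄+1, n ≤ n̄, trajectories from the same SISO LTI system), the input/output of the plant satisfy the data-driven representation χ̄(t+1) = X̄₊ · [X̄₋; U₋]† · col(χ̄(t), u(t)) and y(t) = e_{n̄}ᵀ χ̄(t+1), where X̄₊ = [χ̄_d(1),…,χ̄_d(T)] and † denotes the Moore-Penrose inverse. -/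
open Matrix

open Polynomial

/-- The stacked data matrix `J = col(X̄₋, U₋)`, with `X̄₋ = [χ̄_d(0),…,χ̄_d(T−1)]`
and `U₋ = [u_d(0),…,u_d(T−1)]`. -/
def Jmat (nb T : ℕ) (ud yd : ℤ → ℝ) : Matrix (Fin (2 * nb) ⊕ Unit) (Fin T) ℝ :=
  Matrix.of fun i j =>
    match i with
    | Sum.inl i => chi nb ud yd (j.1 : ℤ) i
    | Sum.inr _ => ud (j.1 : ℤ)

/-- The shifted data matrix `X̄₊ = [χ̄_d(1),…,χ̄_d(T)]`. -/
def Xplus (nb T : ℕ) (ud yd : ℤ → ℝ) : Matrix (Fin (2 * nb)) (Fin T) ℝ :=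
  Matrix.of fun i j => chi nb ud yd ((j.1 : ℤ) + 1) i

/-- `Jd` is the Moore-Penrose pseudoinverse of `J` (four Penrose conditions). -/
def IsMoorePenrose {ι κ : Type*} [Fintype ι] [Fintype κ] [DecidableEq ι] [DecidableEq κ]
    (J : Matrix ι κ ℝ) (Jd : Matrix κ ι ℝ) : Prop :=
  J * Jd * J = J ∧ Jd * J * Jd = Jd ∧ (J * Jd)ᵀ = J * Jd ∧ (Jd * J)ᵀ = Jd * J

noncomputable section Stmt11Aux

/-- shift endomorphism on ℤ-signals -/
def shiftE : Module.End ℝ (ℤ → ℝ) where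
  toFun f := fun s => f (s+1)
  map_add' := by intros; rfl
  map_smul' := by intros; rfl

def Phi (P : ℝ[X]) : (ℤ → ℝ) →ₗ[ℝ] (ℤ → ℝ) := Polynomial.aeval shiftE P

lemma Phi_mul (P Q : ℝ[X]) (f : ℤ → ℝ) : Phi (P*Q) f = Phi P (Phi Q f) := by
  unfold Phi; rw [_root_.map_mul]; rfl

lemma Phi_add (P Q : ℝ[X]) (f : ℤ → ℝ) : Phi (P+Q) f = Phi P f + Phi Q f := by
  unfold Phi; rw [_root_.map_add]; rfl

lemma shiftE_pow (k : ℕ) (f : ℤ → ℝ) (s : ℤ) : (shiftE ^ k) f s = f (s + k) := by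
  induction k generalizing f s with
  | zero => simp
  | succ k ih =>
    have : (shiftE ^ (k+1)) f = (shiftE ^ k) (shiftE f) := by
      rw [pow_succ]; rfl
    rw [this, ih]
    show f (s + (k:ℤ) + 1) = f (s + ((k:ℕ)+1 : ℕ))
    congr 1; push_cast; ring

lemma Phi_monomial (k : ℕ) (c : ℝ) (f : ℤ → ℝ) (s : ℤ) :
    Phi (monomial k c) f s = c * f (s + k) := by
  rw [Phi, aeval_monomial]
  show (algebraMap ℝ _ c * shiftE ^ k) f s = _
  rw [Algebra.algebraMap_eq_smul_one]
  show c • ((shiftE ^ k) f) s = _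
  rw [shiftE_pow]; rfl

lemma Phi_CX (c : ℝ) (k : ℕ) (f : ℤ → ℝ) (s : ℤ) : Phi (C c * X^k) f s = c * f (s+k) := by
  rw [C_mul_X_pow_eq_monomial, Phi_monomial]

lemma Phi_X_pow (k : ℕ) (f : ℤ → ℝ) (s : ℤ) : Phi (X^k : ℝ[X]) f s = f (s+k) := by
  have := Phi_CX 1 k f s
  simpa using this

lemma Phi_sum_apply {ι : Type*} (S : Finset ι) (P : ι → ℝ[X]) (f : ℤ → ℝ) (s : ℤ) :
    Phi (∑ i ∈ S, P i) f s = ∑ i ∈ S, Phi (P i) f s := by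
  unfold Phi
  rw [map_sum]
  rw [LinearMap.coe_sum, Finset.sum_apply, Finset.sum_apply]

lemma Phi_support (P : ℝ[X]) (f : ℤ → ℝ) (s : ℤ) :
    Phi P f s = ∑ k ∈ P.support, P.coeff k * f (s + k) := by
  conv_lhs => rw [P.as_sum_support]
  rw [Phi_sum_apply]
  exact Finset.sum_congr rfl fun k _ => Phi_monomial k _ f s

lemma Phi_range (P : ℝ[X]) (N : ℕ) (h : P.natDegree < N) (f : ℤ → ℝ) (s : ℤ) :
    Phi P f s = ∑ k ∈ Finset.range N, P.coeff k * f (s + k) := by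
  rw [Phi_support]
  refine Finset.sum_subset (fun k hk => ?_) (fun k _ hk => ?_)
  · exact Finset.mem_range.2 (lt_of_le_of_lt (le_natDegree_of_mem_supp k hk) h)
  · rw [notMem_support_iff.1 hk, zero_mul]


lemma Phi_window {m : ℕ} (c : Fin m → ℝ) (e : Fin m → ℕ) (f : ℤ → ℝ) (s : ℤ) :
    Phi (∑ i : Fin m, C (c i) * X^(e i)) f s = ∑ i : Fin m, c i * f (s + e i) := by
  rw [Phi_sum_apply]
  exact Finset.sum_congr rfl fun i _ => Phi_CX _ _ f s

variable {n : ℕ} (a b : Fin n → ℝ)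

def Apoly : ℝ[X] := (X : ℝ[X]) ^ n + ∑ j : Fin n, C (a j) * X ^ (n - 1 - j.1)
def Bpoly : ℝ[X] := ∑ j : Fin n, C (b j) * X ^ (n - 1 - j.1)

lemma Phi_Apoly (f : ℤ → ℝ) (s : ℤ) :
    Phi (Apoly a) f s = f (s + n) + ∑ j : Fin n, a j * f (s + ((n - 1 - j.1 : ℕ) : ℤ)) := by
  rw [Apoly, Phi_add, Pi.add_apply, Phi_X_pow, Phi_window]

lemma Phi_Bpoly (f : ℤ → ℝ) (s : ℤ) :
    Phi (Bpoly b) f s = ∑ j : Fin n, b j * f (s + ((n - 1 - j.1 : ℕ) : ℤ)) := by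
  rw [Bpoly, Phi_window]

lemma arx_phi (hn : 1 ≤ n) (u y : ℤ → ℝ)
    (hARX : ∀ t : ℤ, y t = -∑ j : Fin n, a j * y (t - 1 - (j.1 : ℤ))
      + ∑ j : Fin n, b j * u (t - 1 - (j.1 : ℤ))) :
    ∀ s : ℤ, Phi (Apoly a) y s = Phi (Bpoly b) u s := by
  intro s
  rw [Phi_Apoly, Phi_Bpoly]
  have h := hARX (s + n)
  have ey : ∀ j : Fin n, y (s + ((n - 1 - j.1 : ℕ) : ℤ)) = y (s + n - 1 - (j.1 : ℤ)) := by
    intro j; congr 1; have := j.2; push_cast [Nat.cast_sub] <;> omega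
  have eu : ∀ j : Fin n, u (s + ((n - 1 - j.1 : ℕ) : ℤ)) = u (s + n - 1 - (j.1 : ℤ)) := by
    intro j; congr 1; have := j.2; push_cast [Nat.cast_sub] <;> omega
  simp only [ey, eu]
  rw [h]; ring

lemma Apoly_monic (hn : 1 ≤ n) : (Apoly a).Monic := by
  have hdeg : (∑ j : Fin n, C (a j) * X ^ (n - 1 - j.1) : ℝ[X]).degree < (n : ℕ) := by
    apply lt_of_le_of_lt (Polynomial.degree_sum_le _ _)
    rw [Finset.sup_lt_iff (by exact_mod_cast WithBot.bot_lt_coe (n:ℕ))]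
    intro j _
    apply lt_of_le_of_lt (degree_C_mul_X_pow_le _ _)
    exact_mod_cast Nat.lt_of_le_of_lt (Nat.sub_le _ _) (by omega)
  exact Polynomial.monic_X_pow_add hdeg

def Mmat (n nb : ℕ) (a b : Fin n → ℝ) :
    Matrix (Fin (2*nb)) (Fin (2*nb) ⊕ Unit) ℝ :=
  Matrix.of fun i k =>
    match k with
    | Sum.inl k =>
      if i.1 = nb - 1 then
        (∑ j : Fin n, if k.1 = nb - 1 - j.1 then -(a j) else 0)
          + (∑ j : Fin n, if k.1 = 2*nb - 1 - j.1 then b j else 0)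
      else if i.1 = 2*nb - 1 then 0
      else if k.1 = i.1 + 1 then 1 else 0
    | Sum.inr _ => if i.1 = 2*nb - 1 then 1 else 0

lemma chi_succ {n nb : ℕ} (hn : 1 ≤ n) (hnb : n ≤ nb) (a b : Fin n → ℝ)
    (u y : ℤ → ℝ)
    (hARX : ∀ t : ℤ, y t = -∑ j : Fin n, a j * y (t - 1 - (j.1 : ℤ))
      + ∑ j : Fin n, b j * u (t - 1 - (j.1 : ℤ)))
    (t : ℤ) :
    chi nb u y (t+1) = (Mmat n nb a b).mulVec (Sum.elim (chi nb u y t) fun _ => u t) := by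
  funext i
  have hnb1 : 1  ≤ nb := le_trans hn hnb
  rw [Matrix.mulVec, dotProduct, Fintype.sum_sum_type]
  simp only [Finset.univ_unique, Finset.sum_singleton]
  by_cases h1 : i.1 = nb - 1
  · -- ARX row
    have hMrow : ∀ k : Fin (2*nb), Mmat n nb a b i (Sum.inl k) =
        (∑ j : Fin n, if k.1 = nb - 1 - j.1 then -(a j) else 0)
          + (∑ j : Fin n, if k.1 = 2*nb - 1 - j.1 then b j else 0) := by
      intro k; simp only [Mmat, Matrix.of_apply]; rw [if_pos h1]
    have hMr : Mmat n nb a b i (Sum.inr ()) = 0 := by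
      simp only [Mmat, Matrix.of_apply]; rw [if_neg (by omega)]
    simp only [hMrow, hMr, zero_mul, add_zero, Sum.elim_inl, Sum.elim_inr]
    rw [Finset.sum_congr rfl (fun k _ => add_mul _ _ _), Finset.sum_add_distrib]
    have e1 : ∑ k : Fin (2*nb), (∑ j : Fin n, if k.1 = nb - 1 - j.1 then -(a j) else 0)
          * chi nb u y t k = -∑ j : Fin n, a j * y (t - 1 - (j.1 : ℤ)) := by
      rw [Finset.sum_congr rfl (fun k _ => Finset.sum_mul _ _ _), Finset.sum_comm,
        ← Finset.sum_neg_distrib]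
      refine Finset.sum_congr rfl fun j _ => ?_
      have hj : nb - 1 - j.1 < 2*nb := by omega
      rw [Finset.sum_eq_single (⟨nb - 1 - j.1, hj⟩ : Fin (2*nb))]
      · rw [if_pos rfl, chi]
        have hlt : nb - 1 - j.1 < nb := by omega
        simp only [hlt, if_pos]
        have : t - (nb:ℤ) + ((nb - 1 - j.1 : ℕ) : ℤ) = t - 1 - (j.1 : ℤ) := by
          have := j.2; push_cast; omega
        rw [this]; ring
      · intro k _ hk
        rw [if_neg (fun hc => hk (Fin.ext hc)), zero_mul]
      · intro hk; exact absurd (Finset.mem_univ _) hk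
    have e2 : ∑ k : Fin (2*nb), (∑ j : Fin n, if k.1 = 2*nb - 1 - j.1 then b j else 0)
          * chi nb u y t k = ∑ j : Fin n, b j * u (t - 1 - (j.1 : ℤ)) := by
      rw [Finset.sum_congr rfl (fun k _ => Finset.sum_mul _ _ _), Finset.sum_comm]
      refine Finset.sum_congr rfl fun j _ => ?_
      have hj : 2*nb - 1 - j.1 < 2*nb := by omega
      rw [Finset.sum_eq_single (⟨2*nb - 1 - j.1, hj⟩ : Fin (2*nb))]
      · rw [if_pos rfl, chi]
        have hge : ¬ (2*nb - 1 - j.1 < nb) := by have := j.2; omega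
        simp only [hge, if_neg, if_false]
        have : t - (nb:ℤ) + ((2*nb - 1 - j.1 - nb : ℕ) : ℤ) = t - 1 - (j.1 : ℤ) := by
          have := j.2; push_cast; omega
        rw [this]
      · intro k _ hk
        rw [if_neg (fun hc => hk (Fin.ext hc)), zero_mul]
      · intro hk; exact absurd (Finset.mem_univ _) hk
    rw [e1, e2, chi]
    have hi : i.1 < nb := by omega
    simp only [hi, if_pos]
    have : t + 1 - (nb:ℤ) + (i.1 : ℤ) = t := by have := i.2; omega
    rw [this, hARX t]
  · by_cases h2 : i.1 = 2*nb - 1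
    · -- last input row
      have hMrow : ∀ k : Fin (2*nb), Mmat n nb a b i (Sum.inl k) = 0 := by
        intro k; simp only [Mmat, Matrix.of_apply]; rw [if_neg h1, if_pos h2]
      have hMr : Mmat n nb a b i (Sum.inr ()) = 1 := by
        simp only [Mmat, Matrix.of_apply]; rw [if_pos h2]
      simp only [hMrow, hMr, zero_mul, one_mul, Sum.elim_inr, Finset.sum_const_zero, zero_add]
      rw [chi]
      have hge : ¬ (i.1 < nb) := by omega
      simp only [hge, if_neg, if_false]
      have : t + 1 - (nb:ℤ) + ((i.1 - nb : ℕ) : ℤ) = t := by have := i.2; push_cast; omega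
      rw [this]
    · -- shift rows
      have hilt : i.1 + 1 < 2*nb := by have := i.2; omega
      have hMrow : ∀ k : Fin (2*nb), Mmat n nb a b i (Sum.inl k) =
          if k.1 = i.1 + 1 then 1 else 0 := by
        intro k; simp only [Mmat, Matrix.of_apply]; rw [if_neg h1, if_neg h2]
      have hMr : Mmat n nb a b i (Sum.inr ()) = 0 := by
        simp only [Mmat, Matrix.of_apply]; rw [if_neg h2]
      simp only [hMrow, hMr, zero_mul, add_zero, Sum.elim_inl]
      rw [Finset.sum_eq_single (⟨i.1 + 1, hilt⟩ : Fin (2*nb))]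
      · rw [if_pos rfl, one_mul, chi, chi]
        by_cases hy : i.1 + 1 < nb
        · have hy' : i.1 < nb := by omega
          simp only [hy, hy', if_pos]
          congr 1; push_cast; ring
        · have hy' : ¬ (i.1 < nb) := by omega
          simp only [hy, hy', if_neg, if_false]
          congr 1
          have := i.2; push_cast; omega
      · intro k _ hk
        rw [if_neg (fun hc => hk (Fin.ext hc)), zero_mul]
      · intro hk; exact absurd (Finset.mem_univ _) hk

lemma sum_split {M : Type*} [AddCommMonoid M] (nb : ℕ) (G : Fin (2*nb) → M) :
    ∑ i, G i = (∑ i : Fin nb, G ⟨i.1, by omega⟩) + ∑ i : Fin nb, G ⟨nb + i.1, by omega⟩ := by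
  have h1 := Equiv.sum_comp (finCongr (two_mul nb))
    (fun i : Fin (nb+nb) => G ⟨i.1, by omega⟩)
  rw [Fin.sum_univ_add] at h1
  simp only [finCongr_apply, Fin.coe_cast, Fin.coe_castAdd, Fin.coe_natAdd] at h1
  rw [← h1]

def Hpoly (nb : ℕ) (ξ : (Fin (2*nb) ⊕ Unit) → ℝ) : ℝ[X] :=
  ∑ i : Fin nb, C (ξ (Sum.inl ⟨i.1, by omega⟩)) * X ^ (i.1)

def Tpoly (nb : ℕ) (ξ : (Fin (2*nb) ⊕ Unit) → ℝ) : ℝ[X] :=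
  (∑ i : Fin nb, C (ξ (Sum.inl ⟨nb + i.1, by omega⟩)) * X ^ (i.1)) + C (ξ (Sum.inr ())) * X ^ nb

lemma Hpoly_natDegree_le (nb : ℕ) (ξ) : (Hpoly nb ξ).natDegree ≤ nb - 1 := by
  apply Polynomial.natDegree_sum_le_of_forall_le
  intro i _
  exact le_trans (natDegree_C_mul_X_pow_le _ _) (by omega)

lemma Tpoly_natDegree_le (nb : ℕ) (ξ) : (Tpoly nb ξ).natDegree ≤ nb := by
  apply le_trans (Polynomial.natDegree_add_le _ _)
  apply max_le
  · apply Polynomial.natDegree_sum_le_of_forall_le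
    intro i _
    exact le_trans (natDegree_C_mul_X_pow_le _ _) (by omega)
  · exact natDegree_C_mul_X_pow_le _ _

lemma window_eq (nb : ℕ) (ξ : (Fin (2*nb) ⊕ Unit) → ℝ) (w z : ℤ → ℝ) (s : ℤ) :
    (∑ i : Fin (2*nb), ξ (Sum.inl i) * chi nb w z (s + nb) i) + ξ (Sum.inr ()) * w (s + nb)
      = Phi (Hpoly nb ξ) z s + Phi (Tpoly nb ξ) w s := by
  rw [sum_split nb (fun i => ξ (Sum.inl i) * chi nb w z (s+(nb:ℤ)) i)]
  rw [Hpoly, Tpoly, Phi_window, Phi_add, Pi.add_apply, Phi_window, Phi_CX]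
  have e1 : ∀ i : Fin nb, chi nb w z (s + nb) ⟨i.1, by omega⟩ = z (s + (i.1 : ℤ)) := by
    intro i
    rw [chi]
    simp only [i.2, if_pos]
    congr 1; omega
  have e2 : ∀ i : Fin nb, chi nb w z (s + nb) ⟨nb + i.1, by omega⟩ = w (s + (i.1 : ℤ)) := by
    intro i
    rw [chi]
    have hge : ¬ (nb + i.1 < nb) := by omega
    simp only [hge, if_neg, if_false]
    congr 1; push_cast; omega
  simp only [e1, e2]
  ring

lemma Phi_neg (R : ℝ[X]) (f : ℤ → ℝ) : Phi (-R) f = -(Phi R f) := by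
  unfold Phi; rw [map_neg]; rfl

lemma Bpoly_natDegree_le : (Bpoly b).natDegree ≤ n - 1 := by
  apply Polynomial.natDegree_sum_le_of_forall_le
  intro j _
  exact le_trans (natDegree_C_mul_X_pow_le _ _) (by omega)

lemma Apoly_natDegree_le : (Apoly a).natDegree ≤ n := by
  apply le_trans (Polynomial.natDegree_add_le _ _)
  apply max_le
  · exact le_of_eq (natDegree_X_pow n)
  · apply Polynomial.natDegree_sum_le_of_forall_le
    intro j _
    exact le_trans (natDegree_C_mul_X_pow_le _ _) (by omega)

lemma euclid_inner {ι : Type*} [Fintype ι] (x y : EuclideanSpace ℝ ι) :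
    (inner ℝ x y : ℝ) = ∑ i, x i * y i := by
  simp [PiLp.inner_apply, RCLike.inner_apply, conj_trivial, mul_comm]

lemma mem_range_lemma {n nb T : ℕ} (hn : 1 ≤ n) (hnb : n ≤ nb) (hT : 4 * nb + 1 ≤ T)
    (a b : Fin n → ℝ)
    (hcop : IsCoprime (Apoly a) (Bpoly b))
    (ud yd : ℤ → ℝ)
    (hARXd : ∀ t : ℤ, yd t = -∑ j : Fin n, a j * yd (t - 1 - (j.1 : ℤ))
      + ∑ j : Fin n, b j * ud (t - 1 - (j.1 : ℤ)))
    (hPE : (HankelZ ud (-(nb : ℤ)) (2 * nb + 1) (T + nb - (2 * nb + 1) + 1)).rank = 2 * nb + 1)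
    (u y : ℤ → ℝ)
    (hARX : ∀ t : ℤ, y t = -∑ j : Fin n, a j * y (t - 1 - (j.1 : ℤ))
      + ∑ j : Fin n, b j * u (t - 1 - (j.1 : ℤ)))
    (t : ℤ) :
    ∃ g : Fin T → ℝ, (Jmat nb T ud yd).mulVec g = Sum.elim (chi nb u y t) (fun _ => u t) := by
  have hnb1 : 1 ≤ nb := le_trans hn hnb
  set J := Jmat nb T ud yd with hJdef
  let L : (Fin T → ℝ) →ₗ[ℝ] EuclideanSpace ℝ (Fin (2*nb) ⊕ Unit) := (WithLp.linearEquiv 2 ℝ _).symm.toLinearMap ∘ₗ J.mulVecLin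
  set v : EuclideanSpace ℝ (Fin (2*nb) ⊕ Unit) :=
    WithLp.toLp 2 (Sum.elim (chi nb u y t) (fun _ => u t)) with hvdef
  suffices h : v ∈ LinearMap.range L by
    obtain ⟨g, hg⟩ := h; exact ⟨g, congrArg WithLp.ofLp hg⟩
  rw [← Submodule.orthogonal_orthogonal (LinearMap.range L)]
  rw [Submodule.mem_orthogonal]
  intro ξ hξ
  rw [Submodule.mem_orthogonal] at hξ
  -- step 1: ξ annihilates the columns of J
  have hker : ∀ j : Fin T, (∑ i : Fin (2*nb), ξ (Sum.inl i) * chi nb ud yd (j.1 : ℤ) i)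
      + ξ (Sum.inr ()) * ud (j.1 : ℤ) = 0 := by
    intro j
    have hmem : L (Pi.single j 1) ∈ LinearMap.range L := ⟨Pi.single j 1, rfl⟩
    have h0 := hξ _ hmem
    rw [euclid_inner] at h0
    have hLs : ∀ i : Fin (2*nb) ⊕ Unit, L (Pi.single j 1) i = J i j := by
      intro i
      show J.mulVec (Pi.single j 1) i = J i j
      rw [Matrix.mulVec_single]
      exact mul_one _
    rw [Finset.sum_congr rfl (fun i _ => by rw [hLs i])] at h0
    rw [Fintype.sum_sum_type] at h0
    simp only [Finset.univ_unique, Finset.sum_singleton] at h0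
    have hJl : ∀ i : Fin (2*nb), J (Sum.inl i) j = chi nb ud yd (j.1 : ℤ) i := fun i => rfl
    have hJr : J (Sum.inr ()) j = ud (j.1 : ℤ) := rfl
    rw [Finset.sum_congr rfl (fun i _ => by rw [hJl i]), hJr] at h0
    rw [Finset.sum_congr rfl (fun (i : Fin (2*nb)) _ =>
      mul_comm (ξ (Sum.inl i)) (chi nb ud yd (j.1 : ℤ) i)),
      mul_comm (ξ (Sum.inr ())) (ud (j.1 : ℤ))]
    exact h0
  -- step 2: window identity for the data
  set Hp := Hpoly nb ξ with hHp
  set Tp := Tpoly nb ξ with hTp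
  have hwin : ∀ s : ℤ, -(nb:ℤ) ≤ s → s ≤ (T:ℤ) - 1 - nb →
      Phi Hp yd s + Phi Tp ud s = 0 := by
    intro s h1 h2
    have hj : (s + nb).toNat < T := by omega
    have hcast : (((s + nb).toNat : ℕ) : ℤ) = s + nb := Int.toNat_of_nonneg (by omega)
    have h3 := hker ⟨(s + nb).toNat, hj⟩
    simp only [hcast] at h3
    rw [window_eq] at h3
    exact h3
  -- step 3: the combined polynomial annihilates the input data
  have hAyd : ∀ s : ℤ, Phi (Apoly a) yd s = Phi (Bpoly b) ud s := arx_phi a b hn ud yd hARXd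
  have hAy : ∀ s : ℤ, Phi (Apoly a) y s = Phi (Bpoly b) u s := arx_phi a b hn u y hARX
  set P := Hp * Bpoly b + Apoly a * Tp with hPdef
  have hPud : ∀ s : ℤ, -(nb:ℤ) ≤ s → s ≤ (T:ℤ) - 1 - nb - n → Phi P ud s = 0 := by
    intro s h1 h2
    have e1 : Phi P ud = Phi (Apoly a) (fun r => Phi Hp yd r + Phi Tp ud r) := by
      rw [hPdef, Phi_add, Phi_mul, Phi_mul]
      have eB : Phi (Bpoly b) ud = Phi (Apoly a) yd := funext fun s => (hAyd s).symm
      rw [eB, ← Phi_mul, mul_comm Hp, Phi_mul]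
      have : (fun r => Phi Hp yd r + Phi Tp ud r) = Phi Hp yd + Phi Tp ud := rfl
      rw [this, map_add]
    rw [e1, Phi_Apoly]
    have z1 : Phi Hp yd (s + n) + Phi Tp ud (s + n) = 0 := hwin _ (by omega) (by omega)
    have z2 : ∀ j : Fin n, Phi Hp yd (s + ((n - 1 - j.1 : ℕ) : ℤ))
        + Phi Tp ud (s + ((n - 1 - j.1 : ℕ) : ℤ)) = 0 := by
      intro j
      have hle : ((n - 1 - j.1 : ℕ) : ℤ) ≤ n := by
        have := j.2; omega
      exact hwin _ (by omega) (by omega)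
    rw [z1, Finset.sum_congr rfl (fun j _ => by rw [z2 j])]
    simp
  -- step 4: persistency of excitation gives P = 0
  set N := T + nb - (2*nb+1) + 1 with hN
  set Hk := HankelZ ud (-(nb : ℤ)) (2*nb+1) N with hHk
  have hdegP : P.natDegree ≤ 2*nb := by
    rw [hPdef]
    apply le_trans (Polynomial.natDegree_add_le _ _)
    apply max_le
    · apply le_trans Polynomial.natDegree_mul_le
      have h1 : Hp.natDegree ≤ nb - 1 := Hpoly_natDegree_le nb ξ
      have h2 := Bpoly_natDegree_le b
      omega
    · apply le_trans Polynomial.natDegree_mul_le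
      have h1 := Apoly_natDegree_le a
      have h2 : Tp.natDegree ≤ nb := Tpoly_natDegree_le nb ξ
      omega
  set p : Fin (2*nb+1) → ℝ := fun k => P.coeff k.1 with hp
  have hHkp : Hkᵀ.mulVecLin p = 0 := by
    funext jc
    have h4 : Hkᵀ.mulVec p jc
        = ∑ k : Fin (2*nb+1), P.coeff k.1 * ud (-(nb:ℤ) + (jc.1:ℤ) + (k.1:ℤ)) := by
      rw [Matrix.mulVec, dotProduct]
      refine Finset.sum_congr rfl fun k _ => ?_
      rw [mul_comm]
      congr 1
      show ud (-(nb:ℤ) + (k.1:ℤ) + (jc.1:ℤ)) = _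
      congr 1; ring
    have h5 : Phi P ud (-(nb:ℤ) + jc.1)
        = ∑ k : Fin (2*nb+1), P.coeff k.1 * ud (-(nb:ℤ) + (jc.1:ℤ) + (k.1:ℤ)) := by
      rw [Phi_range P (2*nb+1) (by omega) ud, Finset.sum_range]
    show Hkᵀ.mulVec p jc = (0:ℝ)
    rw [h4, ← h5]
    have hjc : jc.1 < T + nb - (2 * nb + 1) + 1 := jc.2
    have hjc' : (jc.1 : ℤ) ≤ (T:ℤ) - (nb:ℤ) - 1 := by omega
    exact hPud _ (by omega) (by omega)
  have hp0 : p = 0 := by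
    have hrankT : Hkᵀ.rank = 2*nb+1 := by rw [Matrix.rank_transpose]; exact hPE
    have hinj : Function.Injective Hkᵀ.mulVecLin := by
      rw [← LinearMap.ker_eq_bot]
      have hrn := LinearMap.finrank_range_add_finrank_ker Hkᵀ.mulVecLin
      rw [Module.finrank_fintype_fun_eq_card, Fintype.card_fin] at hrn
      have hr : Module.finrank ℝ (LinearMap.range Hkᵀ.mulVecLin) = 2*nb+1 := hrankT
      rw [Submodule.eq_bot_iff]
      have hk0 : Module.finrank ℝ (LinearMap.ker Hkᵀ.mulVecLin) = 0 := by omega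
      intro x hx
      have hbot := Submodule.finrank_eq_zero.1 hk0
      rw [hbot] at hx
      exact hx
    have h7 := hHkp
    rw [show (0 : Fin N → ℝ) = Hkᵀ.mulVecLin 0 from (map_zero _).symm] at h7
    exact hinj h7
  have hP0 : P = 0 := by
    apply Polynomial.ext
    intro k
    rcases le_or_gt k (2*nb) with hk | hk
    · have := congrFun hp0 ⟨k, by omega⟩
      simpa using this
    · rw [Polynomial.coeff_eq_zero_of_natDegree_lt (by omega), Polynomial.coeff_zero]
  -- step 5: coprimality gives the structure of (Hp, Tp)
  have hP0' : Hp * Bpoly b + Apoly a * Tp = 0 := by rw [← hPdef, hP0]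
  have hdvd : Apoly a ∣ Hp * Bpoly b := ⟨-Tp, by linear_combination hP0'⟩
  obtain ⟨Q, hQ⟩ := hcop.dvd_of_dvd_mul_right hdvd
  have hA0 : Apoly a ≠ 0 := (Apoly_monic a hn).ne_zero
  have hTpe : Tp = -(Q * Bpoly b) := by
    have hz : Apoly a * (Q * Bpoly b + Tp) = 0 := by
      rw [hQ] at hP0'; linear_combination hP0'
    rcases mul_eq_zero.1 hz with h | h
    · exact absurd h hA0
    · linear_combination h
  -- step 6: conclude orthogonality to v
  rw [euclid_inner]
  have h6 := window_eq nb ξ u y (t - (nb:ℤ))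
  have ht : t - (nb:ℤ) + nb = t := by omega
  rw [ht] at h6
  calc ∑ i, ξ i * v i
      = (∑ i : Fin (2*nb), ξ (Sum.inl i) * chi nb u y t i) + ξ (Sum.inr ()) * u t := by
        rw [Fintype.sum_sum_type]
        simp [hvdef]
    _ = Phi (Hpoly nb ξ) y (t - (nb:ℤ)) + Phi (Tpoly nb ξ) u (t - (nb:ℤ)) := h6
    _ = 0 := by
        rw [← hHp, ← hTp, hQ, hTpe, Phi_neg, mul_comm (Apoly a) Q, Phi_mul, Phi_mul]
        have eB : Phi (Bpoly b) u = Phi (Apoly a) y := funext fun s => (hAy s).symm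
        rw [eB]
        simp

/-- Theorem 1: under the hypotheses of Lemma 2, the input/output of the plant satisfy the
data-driven representation `χ̄(t+1) = X̄₊ [X̄₋; U₋]† col(χ̄(t), u(t))` and
`y(t) = e_{n̄}ᵀ χ̄(t+1)`. -/
theorem stmt11 (n nb T : ℕ) (hn : 1 ≤ n) (hnb : n ≤ nb) (hT : 4 * nb + 1 ≤ T)
    (a b : Fin n → ℝ)
    (hcop : IsCoprime
      ((X : Polynomial ℝ) ^ n + ∑ j : Fin n, C (a j) * X ^ (n - 1 - j.1))
      (∑ j : Fin n, C (b j) * X ^ (n - 1 - j.1)))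
    (ud yd : ℤ → ℝ)
    (hARXd : ∀ t : ℤ, yd t = -∑ j : Fin n, a j * yd (t - 1 - (j.1 : ℤ))
      + ∑ j : Fin n, b j * ud (t - 1 - (j.1 : ℤ)))
    (hPE : (HankelZ ud (-(nb : ℤ)) (2 * nb + 1) (T + nb - (2 * nb + 1) + 1)).rank = 2 * nb + 1)
    (u y : ℤ → ℝ)
    (hARX : ∀ t : ℤ, y t = -∑ j : Fin n, a j * y (t - 1 - (j.1 : ℤ))
      + ∑ j : Fin n, b j * u (t - 1 - (j.1 : ℤ)))
    (Jd : Matrix (Fin T) (Fin (2 * nb) ⊕ Unit) ℝ)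
    (hJd : IsMoorePenrose (Jmat nb T ud yd) Jd) :
    ∀ t : ℤ,
      chi nb u y (t + 1)
        = (Xplus nb T ud yd).mulVec
            (Jd.mulVec (Sum.elim (chi nb u y t) (fun _ => u t))) ∧
      y t = chi nb u y (t + 1) ⟨nb - 1, by omega⟩ := by
  intro t
  have hnb1 : 1 ≤ nb := le_trans hn hnb
  constructor
  · -- data-driven representation
    obtain ⟨g, hg⟩ := mem_range_lemma hn hnb hT a b hcop ud yd hARXd hPE u y hARX t
    have hXJ : Xplus nb T ud yd = Mmat n nb a b * Jmat nb T ud yd := by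
      ext i j
      rw [Matrix.mul_apply]
      have hcol : ∀ k, Jmat nb T ud yd k j
          = Sum.elim (chi nb ud yd (j.1 : ℤ)) (fun _ => ud (j.1 : ℤ)) k := by
        intro k; cases k <;> rfl
      rw [Finset.sum_congr rfl (fun k _ => by rw [hcol k])]
      have h := congrFun (chi_succ hn hnb a b ud yd hARXd (j.1 : ℤ)) i
      show chi nb ud yd ((j.1 : ℤ) + 1) i = _
      rw [h]
      rfl
    rw [hXJ, ← hg, Matrix.mulVec_mulVec, Matrix.mulVec_mulVec]
    have hJJ : Mmat n nb a b * Jmat nb T ud yd * (Jd * Jmat nb T ud yd)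
        = Mmat n nb a b * Jmat nb T ud yd := by
      rw [Matrix.mul_assoc (Mmat n nb a b) (Jmat nb T ud yd) (Jd * Jmat nb T ud yd),
        ← Matrix.mul_assoc (Jmat nb T ud yd) Jd (Jmat nb T ud yd), hJd.1]
    rw [Matrix.mul_assoc (Mmat n nb a b * Jmat nb T ud yd) Jd (Jmat nb T ud yd), hJJ,
      ← Matrix.mulVec_mulVec, hg]
    exact chi_succ hn hnb a b u y hARX t
  · -- output readout
    symm
    show (if ((⟨nb - 1, by omega⟩ : Fin (2*nb)).1) < nb
        then y (t + 1 - (nb : ℤ) + (((⟨nb - 1, by omega⟩ : Fin (2*nb)).1 : ℕ) : ℤ))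
        else u (t + 1 - (nb : ℤ) + (((((⟨nb - 1, by omega⟩ : Fin (2*nb)).1) - nb : ℕ)) : ℤ)))
      = y t
    rw [if_pos (show nb - 1 < nb by omega)]
    congr 1
    push_cast [Nat.cast_sub hnb1]
    ring
end Stmt11Aux
end
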